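/- arXiv:2405.02981 — 2 statements merged into one kernel-verified Lean document; each statement's English description precedes it below -/
import Mathlib

section
/- Fix K ≥ 2, real d > 1, and set η = 1/(d^K + d^{-K}). Let ℓ ∈ {0,...,K-1} and let α_k ∈ {d·e^{2πik/K}, d^{-1}·e^{2πik/K}} for each k ≠ ℓ be chosen independently and uniformly at random, with α_ℓ = d^{-1}·e^{2πiℓ/K} fixed. Let X(z) = x_K ∏_k (z - α_k) with x_K = sqrt(η(K+1)/∏_k |α_k|). Then E[|X(d·e^{2πiℓ/K})|²] = η(K+1)(d - d^{-1})²·d^K·2^{-(K-1)}·∏_{k=1}^{K-1}(|1 - e^{2πik/K}|² + |d - d^{-1}e^{2πik/K}|²). -/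
open MeasureTheory ProbabilityTheory Complex Finset
open scoped ProbabilityTheory

/-!
Squaring cancels the square root of the normalisation, so the integrand is
`η (K + 1) ∏ₖ |z - αₖ|² / |αₖ|` with `z = d e^{2πiℓ/K}`, and by independence its expectation is
the product of the expectations of the factors. The fixed factor `k = ℓ` is `d (d - d⁻¹)²`. For
`k ≠ ℓ`, write `e^{2πik/K} = e^{2πiℓ/K} ζ` with `ζ = e^{2πi(k-ℓ)/K}`; after rotating by
`e^{-2πiℓ/K}` the two equally likely radii contribute `d |1 - ζ|²` and `d |d - d⁻¹ ζ|²`.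
Reindexing by `k - ℓ` modulo `K` turns the product over `k ≠ ℓ` into one over `1 ≤ n < K`.
-/

lemma sq_sqrt_div_prod_norm_mul_norm_prod {ι : Type*} (s : Finset ι) {c : ℝ} (hc : 0 ≤ c)
    (z : ℂ) (w : ι → ℂ) :
    (Real.sqrt (c / ∏ i ∈ s, ‖w i‖) * ‖∏ i ∈ s, (z - w i)‖) ^ 2
      = c * ∏ i ∈ s, ‖z - w i‖ ^ 2 / ‖w i‖ := by
  have hP : 0 ≤ ∏ i ∈ s, ‖w i‖ := prod_nonneg fun i _ => norm_nonneg _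
  rw [mul_pow, Real.sq_sqrt (div_nonneg hc hP), norm_prod, ← prod_pow, prod_div_distrib]
  ring

lemma integral_comp_of_two_valued {Ω β : Type*} [MeasureSpace Ω]
    [IsProbabilityMeasure (ℙ : Measure Ω)] [MeasurableSpace β] [MeasurableSingletonClass β]
    {X : Ω → β} (hX : Measurable X) {a b : β} (hab : ∀ ω, X ω = a ∨ X ω = b)
    (ha : (ℙ : Measure Ω) {ω | X ω = a} = 1 / 2) (g : β → ℝ) :
    ∫ ω, g (X ω) = (g a + g b) / 2 := by
  classical
  set A := {ω | X ω = a}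
  have hA : MeasurableSet A := hX (measurableSet_singleton a)
  have hAc : (ℙ : Measure Ω) Aᶜ = 1 / 2 := by
    rw [prob_compl_eq_one_sub hA, ha, one_div, ENNReal.one_sub_inv_two]
  have hpiece : (fun ω => g (X ω)) = A.piecewise (fun _ => g a) (fun _ => g b) := by
    ext ω
    by_cases hω : ω ∈ A
    · simp only [A.piecewise_eq_of_mem _ _ hω, show X ω = a from hω]
    · simp only [A.piecewise_eq_of_notMem _ _ hω, (hab ω).resolve_left hω]
  rw [hpiece, integral_piecewise hA integrableOn_const integrableOn_const, setIntegral_const,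
    setIntegral_const, measureReal_def, measureReal_def, ha, hAc, smul_eq_mul,
    smul_eq_mul, ENNReal.toReal_div, ENNReal.toReal_one, ENNReal.toReal_ofNat]
  ring

lemma exp_two_pi_I_mul_fin_val_add {K : ℕ} [NeZero K] (a b : Fin K) :
    exp (2 * Real.pi * I * ((a + b : Fin K) : ℕ) / K)
      = exp (2 * Real.pi * I * (a : ℕ) / K) * exp (2 * Real.pi * I * (b : ℕ) / K) := by
  have hζ := isPrimitiveRoot_exp K (NeZero.ne K)
  have hpow (n : ℕ) : exp (2 * Real.pi * I * n / K) = exp (2 * Real.pi * I / K) ^ n := by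
    rw [← Complex.exp_nat_mul]; ring_nf
  rw [hpow, hpow, hpow, Fin.val_add, ← pow_add]
  conv_rhs =>
    rw [← Nat.mod_add_div (a + b : ℕ) K, pow_add, pow_mul, hζ.pow_eq_one, one_pow, mul_one]

lemma norm_exp_two_pi_I_mul_div (K n : ℕ) : ‖exp (2 * Real.pi * I * n / K)‖ = 1 := by
  rw [show 2 * Real.pi * I * n / K = ((2 * Real.pi * n / K : ℝ) : ℂ) * I by push_cast; ring]
  exact norm_exp_ofReal_mul_I _

lemma norm_sub_sq_div_norm_outer {d : ℝ} (hd : 0 < d) {u v : ℂ} (hu : ‖u‖ = 1)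
    (hv : ‖v‖ = 1) :
    ‖d * u - d * (u * v)‖ ^ 2 / ‖(d : ℂ) * (u * v)‖ = d * ‖1 - v‖ ^ 2 := by
  rw [show (d : ℂ) * u - d * (u * v) = d * u * (1 - v) by ring]
  simp only [norm_mul, norm_real, Real.norm_of_nonneg hd.le, hu, hv]
  field_simp

lemma norm_sub_sq_div_norm_inner {d : ℝ} (hd : 0 < d) {u v : ℂ} (hu : ‖u‖ = 1)
    (hv : ‖v‖ = 1) :
    ‖d * u - (d : ℂ)⁻¹ * (u * v)‖ ^ 2 / ‖(d : ℂ)⁻¹ * (u * v)‖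
      = d * ‖d - (d : ℂ)⁻¹ * v‖ ^ 2 := by
  rw [show (d : ℂ) * u - (d : ℂ)⁻¹ * (u * v) = u * (d - (d : ℂ)⁻¹ * v) by ring]
  simp only [norm_mul, norm_inv, norm_real, Real.norm_of_nonneg hd.le, hu, hv]
  field_simp

lemma Finset.prod_erase_sub {G M : Type*} [AddGroup G] [Fintype G] [DecidableEq G] [CommMonoid M]
    (ℓ : G) (f : G → M) : ∏ k ∈ univ.erase ℓ, f (k - ℓ) = ∏ j ∈ univ.erase 0, f j :=
  prod_equiv (Equiv.subRight ℓ) (by simp [sub_eq_zero]) fun _ _ => rfl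

lemma Fin.prod_erase_zero_val {K : ℕ} [NeZero K] {M : Type*} [CommMonoid M] (f : ℕ → M) :
    ∏ j ∈ (univ : Finset (Fin K)).erase 0, f j = ∏ n ∈ Ico 1 K, f n := by
  refine prod_nbij (fun j => j) (fun j hj => ?_) Fin.val_injective.injOn (fun n hn => ?_)
    fun _ _ => rfl
  · exact mem_Ico.mpr ⟨Nat.one_le_iff_ne_zero.mpr (Fin.val_ne_zero_iff.mpr (ne_of_mem_erase hj)),
      j.isLt⟩
  · have hn : 1 ≤ n ∧ n < K := by simpa using hn
    exact ⟨⟨n, hn.2⟩,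
      mem_erase.mpr ⟨Fin.val_ne_zero_iff.mp (Nat.one_le_iff_ne_zero.mp hn.1), mem_univ _⟩, rfl⟩

lemma integral_norm_sub_sq_div_norm_of_two_valued {Ω : Type*} [MeasureSpace Ω]
    [IsProbabilityMeasure (ℙ : Measure Ω)] {X : Ω → ℂ} (hX : Measurable X) {d : ℝ}
    (hd : 0 < d) {u v w : ℂ} (hu : ‖u‖ = 1) (hv : ‖v‖ = 1) (hw : w = u * v)
    (hval : ∀ ω, X ω = d * w ∨ X ω = (d : ℂ)⁻¹ * w)
    (hprob : (ℙ : Measure Ω) {ω | X ω = d * w} = 1 / 2) :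
    ∫ ω, ‖d * u - X ω‖ ^ 2 / ‖X ω‖ = d / 2 * (‖1 - v‖ ^ 2 + ‖d - (d : ℂ)⁻¹ * v‖ ^ 2) := by
  subst hw
  rw [integral_comp_of_two_valued hX hval hprob (fun w => ‖d * u - w‖ ^ 2 / ‖w‖),
    norm_sub_sq_div_norm_outer hd hu hv, norm_sub_sq_div_norm_inner hd hu hv]
  ring

theorem expected_sq_abs_huffman_eval_random_zeros_general
    {Ω : Type*} [MeasureSpace Ω]
    (K : ℕ) (d : ℝ) (hd : 1 < d)
    (η : ℝ) (hη : η = (d ^ K + d⁻¹ ^ K)⁻¹)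
    (ℓ : Fin K) (α : Fin K → Ω → ℂ)
    (hmeas : ∀ k, Measurable (α k))
    (hαℓ : ∀ ω, α ℓ ω
      = (d⁻¹ : ℂ) * Complex.exp (2 * Real.pi * Complex.I * (ℓ : ℕ) / K))
    (hval : ∀ k : Fin K, k ≠ ℓ → ∀ ω,
      α k ω = (d : ℂ) * Complex.exp (2 * Real.pi * Complex.I * (k : ℕ) / K) ∨
      α k ω = (d⁻¹ : ℂ) * Complex.exp (2 * Real.pi * Complex.I * (k : ℕ) / K))
    (hprob : ∀ k : Fin K, k ≠ ℓ →
      (ℙ : Measure Ω)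
        {ω | α k ω = (d : ℂ) * Complex.exp (2 * Real.pi * Complex.I * (k : ℕ) / K)}
        = 1 / 2)
    (hindep : iIndepFun α
      (ℙ : Measure Ω)) :
    ∫ ω, (Real.sqrt (η * (K + 1) / ∏ k : Fin K, ‖α k ω‖)
        * ‖∏ k : Fin K,
            ((d : ℂ) * Complex.exp (2 * Real.pi * Complex.I * (ℓ : ℕ) / K) - α k ω)‖) ^ 2
        ∂(ℙ : Measure Ω)
      = η * (K + 1) * (d - d⁻¹) ^ 2 * d ^ K * (1 / 2 ^ (K - 1))
          * ∏ k ∈ Finset.Ico 1 K,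
              ((‖1 - Complex.exp (2 * Real.pi * Complex.I * k / K)‖) ^ 2
                + (‖(d : ℂ)
                    - (d⁻¹ : ℂ) * Complex.exp (2 * Real.pi * Complex.I * k / K)‖) ^ 2) := by
  have := hindep.isProbabilityMeasure
  have : NeZero K := NeZero.of_pos ℓ.pos
  have hd0 : 0 < d := one_pos.trans hd
  set u := exp (2 * Real.pi * I * (ℓ : ℕ) / K)
  have hu : ‖u‖ = 1 := norm_exp_two_pi_I_mul_div K ℓ
  have hc : 0 ≤ η * (K + 1) := by rw [hη]; positivity
  have hweight_meas : Measurable fun w : ℂ => ‖d * u - w‖ ^ 2 / ‖w‖ := by fun_prop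
  set F : ℕ → ℝ := fun n => ‖1 - exp (2 * Real.pi * I * n / K)‖ ^ 2
    + ‖d - (d : ℂ)⁻¹ * exp (2 * Real.pi * I * n / K)‖ ^ 2
  have hℓ : ∫ ω, ‖d * u - α ℓ ω‖ ^ 2 / ‖α ℓ ω‖ = d * (d - d⁻¹) ^ 2 := by
    have h := norm_sub_sq_div_norm_inner hd0 hu norm_one
    simp only [mul_one] at h
    simp only [hαℓ, h, integral_const, probReal_univ, one_smul]
    rw [← ofReal_inv, ← ofReal_sub, norm_real, Real.norm_eq_abs, sq_abs]
  have hne (k : Fin K) (hk : k ≠ ℓ) :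
      ∫ ω, ‖d * u - α k ω‖ ^ 2 / ‖α k ω‖ = d / 2 * F (k - ℓ : Fin K) :=
    integral_norm_sub_sq_div_norm_of_two_valued (hmeas k) hd0 hu (norm_exp_two_pi_I_mul_div K _)
      (by rw [← exp_two_pi_I_mul_fin_val_add, add_sub_cancel]) (hval k hk) (hprob k hk)
  simp_rw [sq_sqrt_div_prod_norm_mul_norm_prod _ hc]
  rw [integral_const_mul, hindep.integral_fun_prod_comp (fun k => (hmeas k).aemeasurable)
      fun _ => hweight_meas.aestronglyMeasurable, ← mul_prod_erase _ _ (mem_univ ℓ), hℓ,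
    prod_congr rfl fun k hk => hne k (ne_of_mem_erase hk), prod_erase_sub ℓ fun j => d / 2 * F j,
    Fin.prod_erase_zero_val fun n => d / 2 * F n, prod_mul_distrib, prod_const, Nat.card_Ico]
  have hdK : d ^ K = d * d ^ (K - 1) := by rw [← pow_succ', Nat.sub_add_cancel ℓ.pos]
  rw [hdK, div_pow]
  ring

theorem expected_sq_abs_huffman_eval_random_zeros
    {Ω : Type*} [MeasureSpace Ω] [IsProbabilityMeasure (ℙ : Measure Ω)]
    (K : ℕ) (hK : 2 ≤ K) (d : ℝ) (hd : 1 < d)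
    (η : ℝ) (hη : η = (d ^ K + d⁻¹ ^ K)⁻¹)
    (ℓ : Fin K) (α : Fin K → Ω → ℂ)
    (hmeas : ∀ k, Measurable (α k))
    (hαℓ : ∀ ω, α ℓ ω
      = (d⁻¹ : ℂ) * Complex.exp (2 * Real.pi * Complex.I * (ℓ : ℕ) / K))
    (hval : ∀ k : Fin K, k ≠ ℓ → ∀ ω,
      α k ω = (d : ℂ) * Complex.exp (2 * Real.pi * Complex.I * (k : ℕ) / K) ∨
      α k ω = (d⁻¹ : ℂ) * Complex.exp (2 * Real.pi * Complex.I * (k : ℕ) / K))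
    (hprob : ∀ k : Fin K, k ≠ ℓ →
      (ℙ : Measure Ω)
        {ω | α k ω = (d : ℂ) * Complex.exp (2 * Real.pi * Complex.I * (k : ℕ) / K)}
        = 1 / 2)
    (hindep : iIndepFun α
      (ℙ : Measure Ω)) :
    ∫ ω, (Real.sqrt (η * (K + 1) / ∏ k : Fin K, ‖α k ω‖)
        * ‖∏ k : Fin K,
            ((d : ℂ) * Complex.exp (2 * Real.pi * Complex.I * (ℓ : ℕ) / K) - α k ω)‖) ^ 2
        ∂(ℙ : Measure Ω)
      = η * (K + 1) * (d - d⁻¹) ^ 2 * d ^ K * (1 / 2 ^ (K - 1))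
          * ∏ k ∈ Finset.Ico 1 K,
              ((‖1 - Complex.exp (2 * Real.pi * Complex.I * k / K)‖) ^ 2
                + (‖(d : ℂ)
                    - (d⁻¹ : ℂ) * Complex.exp (2 * Real.pi * Complex.I * k / K)‖) ^ 2) :=
  expected_sq_abs_huffman_eval_random_zeros_general K d hd η hη ℓ α hmeas hαℓ hval hprob hindep
end

section
/- Fix K ≥ 2, real d > 1, η = 1/(d^K + d^{-K}), and indices ℓ, l ∈ {0,...,K-1}. Let α_l = d^{-1}·e^{2πil/K} and α_k = d·e^{2πik/K} for all k ≠ l, and X(z) = x_K ∏_k(z - α_k) with x_K = sqrt(η(K+1)/∏_k|α_k|). Then |X(d·e^{2πil/K})|² = η(K+1)(d - d^{-1})²·d^K·K². -/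
/-!
Write `ω = exp (2πi/K)`, so `α k = d ω^k` for `k ≠ l` and `α l = d⁻¹ ω^l`. At `z = d ω^l` the
outer factors are `z - α k = d (ω^l - ω^k)` and the inner one is `(d - d⁻¹) ω^l`. The remaining
product `∏_{k ≠ l} (ω^l - ω^k)` is the derivative of `X^K - 1 = ∏_k (X - ω^k)` at `ω^l`, namely
`K ω^{l(K-1)}`, of modulus `K`. Hence `|∏_k (z - α k)| = (d - d⁻¹) d^{K-1} K`, while
`∏_k |α k| = d^{K-2}`.
-/

open Complex Finset

section

variable {R : Type*} [CommRing R]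

open Polynomial Lagrange in
theorem IsPrimitiveRoot.nodal_pow_eq_X_pow_sub_one [IsDomain R] {ω : R} {n : ℕ}
    (hω : IsPrimitiveRoot ω n) (hn : 0 < n) :
    nodal univ (fun k : Fin n => ω ^ (k : ℕ)) = X ^ n - 1 := by
  rw [nodal_eq, Fin.prod_univ_eq_prod_range (fun i => X - C (ω ^ i)),
    ← C_1, X_pow_sub_C_eq_prod hω hn (one_pow n)]
  simp only [mul_one]

open Polynomial Lagrange in
theorem IsPrimitiveRoot.prod_erase_pow_sub_pow [IsDomain R] {ω : R} {n : ℕ}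
    (hω : IsPrimitiveRoot ω n) (l : Fin n) :
    ∏ k ∈ univ.erase l, (ω ^ (l : ℕ) - ω ^ (k : ℕ)) = n * ω ^ ((l : ℕ) * (n - 1)) := by
  rw [← eval_nodal (v := fun k : Fin n => ω ^ (k : ℕ)),
    ← eval_nodal_derivative_eval_node_eq (v := fun k : Fin n => ω ^ (k : ℕ)) (mem_univ l),
    hω.nodal_pow_eq_X_pow_sub_one l.pos]
  simp [derivative_X_pow, ← pow_mul]

theorem prod_mul_sub_eq_of_eq_mul {n : ℕ} (z α : Fin n → R) (c r : R) (l : Fin n)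
    (hαl : α l = r * z l) (hα : ∀ k, k ≠ l → α k = c * z k) :
    ∏ k, (c * z l - α k) = (c - r) * z l * c ^ (n - 1) * ∏ k ∈ univ.erase l, (z l - z k) := by
  rw [← mul_prod_erase _ _ (mem_univ l), hαl,
    prod_congr rfl fun k hk => by rw [hα k (ne_of_mem_erase hk), ← mul_sub], prod_mul_distrib,
    prod_const, card_erase_of_mem (mem_univ l), card_univ, Fintype.card_fin]
  ring

end

theorem sq_abs_huffman_eval_index_encoding_general
    (K : ℕ) (d : ℝ) (hd : 1 < d)
    (η : ℝ) (hη : η = (d ^ K + d⁻¹ ^ K)⁻¹)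
    (l : Fin K) (α : Fin K → ℂ)
    (hαl : α l = (d⁻¹ : ℂ) * Complex.exp (2 * Real.pi * Complex.I * (l : ℕ) / K))
    (hα : ∀ k : Fin K, k ≠ l →
      α k = (d : ℂ) * Complex.exp (2 * Real.pi * Complex.I * (k : ℕ) / K)) :
    (Real.sqrt (η * (K + 1) / ∏ k : Fin K, ‖α k‖)
        * ‖∏ k : Fin K,
            ((d : ℂ) * Complex.exp (2 * Real.pi * Complex.I * (l : ℕ) / K) - α k)‖) ^ 2
      = η * (K + 1) * (d - d⁻¹) ^ 2 * d ^ K * (K : ℝ) ^ 2 := by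
  obtain ⟨n, rfl⟩ := Nat.exists_eq_add_one_of_ne_zero l.pos.ne'
  set ω := exp (2 * Real.pi * I / (n + 1 : ℕ))
  have hω : IsPrimitiveRoot ω (n + 1) := isPrimitiveRoot_exp _ n.succ_ne_zero
  have hω_pow : ∀ k : ℕ, exp (2 * Real.pi * I * k / (n + 1 : ℕ)) = ω ^ k := fun k => by
    rw [← exp_nat_mul]; ring_nf
  have hnorm_ω : ∀ k : ℕ, ‖ω ^ k‖ = 1 := fun k => by
    rw [norm_pow, hω.norm'_eq_one n.succ_ne_zero, one_pow]
  have hd0 : 0 < d := one_pos.trans hd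
  simp only [hω_pow] at hαl hα ⊢
  have hnorm_α : ∏ k, ‖α k‖ = d⁻¹ * d ^ n := by
    rw [← mul_prod_erase _ _ (mem_univ l), hαl,
      prod_congr rfl fun k hk => by rw [hα k (ne_of_mem_erase hk)]]
    simp [hnorm_ω, abs_of_pos hd0]
  have hnorm_eval : ‖∏ k, ((d : ℂ) * ω ^ (l : ℕ) - α k)‖ = (d - d⁻¹) * d ^ n * (n + 1) := by
    rw [prod_mul_sub_eq_of_eq_mul (fun k : Fin (n + 1) => ω ^ (k : ℕ)) α _ _ l hαl hα,
      hω.prod_erase_pow_sub_pow]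
    have hd_inv_lt : d⁻¹ < d := (inv_lt_one_of_one_lt₀ hd).trans hd
    simp only [norm_mul, norm_pow, hnorm_ω, norm_natCast, ← ofReal_inv, ← ofReal_sub, norm_real,
      Real.norm_of_nonneg hd0.le, Real.norm_of_nonneg (sub_pos.2 hd_inv_lt).le]
    push_cast
    ring
  have hη0 : 0 < η := by rw [hη]; positivity
  rw [mul_pow, Real.sq_sqrt (by rw [hnorm_α]; positivity), hnorm_eval, hnorm_α]
  field_simp
  push_cast
  ring

theorem sq_abs_huffman_eval_index_encoding
    (K : ℕ) (hK : 2 ≤ K) (d : ℝ) (hd : 1 < d)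
    (η : ℝ) (hη : η = (d ^ K + d⁻¹ ^ K)⁻¹)
    (l : Fin K) (α : Fin K → ℂ)
    (hαl : α l = (d⁻¹ : ℂ) * Complex.exp (2 * Real.pi * Complex.I * (l : ℕ) / K))
    (hα : ∀ k : Fin K, k ≠ l →
      α k = (d : ℂ) * Complex.exp (2 * Real.pi * Complex.I * (k : ℕ) / K)) :
    (Real.sqrt (η * (K + 1) / ∏ k : Fin K, ‖α k‖)
        * ‖∏ k : Fin K,
            ((d : ℂ) * Complex.exp (2 * Real.pi * Complex.I * (l : ℕ) / K) - α k)‖) ^ 2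
      = η * (K + 1) * (d - d⁻¹) ^ 2 * d ^ K * (K : ℝ) ^ 2 :=
  sq_abs_huffman_eval_index_encoding_general K d hd η hη l α hαl hα
end
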